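/- Conversely, in the split graph G': any closed walk of G' that visits all vertices and whose length is less than (|U|+1)·L must traverse each of the |U| splitting paths exactly once, and contracting each path-traversal back to a single vertex visit yields a closed walk in G visiting every vertex at least once and each vertex of U exactly once, of length |C'| - |U|·L. -/

import Mathlib

/-- A closed directed walk, given as the list of its arc occurrences. -/
def IsClosedWalk {α : Type*} (w : List (α × α)) : Prop :=
  w ≠ [] ∧ w.Chain' (fun a b => a.2 = b.1) ∧
    w.getLast?.map Prod.snd = w.head?.map Prod.fst

/-- The arc set of the graph `G'` obtained from a directed graph with arc set
`A` by splitting each vertex `u ∈ U` into a directed path of `L` arcs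
`u = x_0, x_1, …, x_L`: vertex `u` itself plays the role of `x_0` (so arcs of
`A` with head `u` keep their head), the new vertices `x_1, …, x_L` are the
pairs `(u, i)` for `i : Fin L`, and arcs of `A` with tail `u` get tail
`x_L = (u, L-1)`. -/
def splitArcs {V : Type*} [DecidableEq V] (A : Set (V × V)) (U : Finset V)
    (L : ℕ) (hL : 0 < L) : Set ((V ⊕ V × Fin L) × (V ⊕ V × Fin L)) :=
  {e | (∃ a b : V, (a, b) ∈ A ∧ e.2 = Sum.inl b ∧
          e.1 = if a ∈ U then Sum.inr (a, ⟨L - 1, Nat.sub_lt hL Nat.one_pos⟩)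
                else Sum.inl a) ∨
       (∃ u ∈ U, e.1 = Sum.inl u ∧ e.2 = Sum.inr (u, ⟨0, hL⟩)) ∨
       (∃ u ∈ U, ∃ i : Fin L, ∃ h : (i : ℕ) + 1 < L,
          e.1 = Sum.inr (u, i) ∧ e.2 = Sum.inr (u, ⟨(i : ℕ) + 1, h⟩))}

instance sumLawfulBEq {α β : Type*} [BEq α] [BEq β] [LawfulBEq α] [LawfulBEq β] :
    LawfulBEq (α ⊕ β) where
  eq_of_beq {a b} h := by
    cases a <;> cases b
    · exact congrArg Sum.inl (eq_of_beq h)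
    · exact absurd h Bool.false_ne_true
    · exact absurd h Bool.false_ne_true
    · exact congrArg Sum.inr (eq_of_beq h)
  rfl {a} := by
    cases a with
    | inl x => show (x == x) = true; exact ReflBEq.rfl
    | inr x => show (x == x) = true; exact ReflBEq.rfl

namespace SplitBack

variable {α β : Type*}

lemma count_eq_countP' [BEq α] [LawfulBEq α] [DecidableEq α] (l : List α) (a : α) :
    l.count a = l.countP (fun b => decide (b = a)) := by
  show List.countP _ l = _
  exact List.countP_congr (fun b _ => by simp)

lemma count_map_eq_countP [BEq β] [LawfulBEq β] [DecidableEq β] (g : α → β) (w : List α) (x : β) :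
    (w.map g).count x = w.countP (fun e => decide (g e = x)) := by
  rw [count_eq_countP', List.countP_map]
  rfl

lemma map_snd_eq (w : List (α × α)) (hc : w.Chain' (fun a b => a.2 = b.1)) (hne : w ≠ []) :
    w.map Prod.snd = (w.map Prod.fst).tail ++ [(w.getLast hne).2] := by
  induction w with
  | nil => exact absurd rfl hne
  | cons e t ih =>
    cases t with
    | nil => simp
    | cons a t' =>
      have h1 : e.2 = a.1 := (List.isChain_cons_cons.mp hc).1
      have h2 := ih (List.isChain_cons_cons.mp hc).2 (by simp)
      rw [List.getLast_cons (by simp : a :: t' ≠ [])]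
      simp only [List.map_cons, List.tail_cons] at h2 ⊢
      rw [h2, h1]
      simp

lemma perm_snd_fst (w : List (α × α)) (h : IsClosedWalk w) :
    (w.map Prod.snd).Perm (w.map Prod.fst) := by
  obtain ⟨hne, hc, hcl⟩ := h
  have h1 := map_snd_eq w hc hne
  have hlast : (w.getLast hne).2 = (w.head hne).1 := by
    rw [List.getLast?_eq_getLast hne, List.head?_eq_head hne] at hcl
    simpa using hcl
  have h2 : w.map Prod.fst = (w.head hne).1 :: (w.map Prod.fst).tail := by
    cases w with
    | nil => exact absurd rfl hne
    | cons a t => simp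
  rw [h1, hlast, h2]
  exact List.perm_append_singleton _ _

lemma countP_fst_eq_snd [DecidableEq α] (w : List (α × α)) (h : IsClosedWalk w) (x : α) :
    w.countP (fun e => decide (e.1 = x)) = w.countP (fun e => decide (e.2 = x)) := by
  have := (perm_snd_fst w h).count_eq x
  rw [count_map_eq_countP, count_map_eq_countP] at this
  exact this.symm

variable (f : α → β) (p : α × α → Bool)

lemma lastf_allloops : ∀ (w : List (α × α)) (hne : w ≠ []),
    w.Chain' (fun a b => a.2 = b.1) → (∀ e ∈ w, f e.1 = f e.2) →
    f (w.getLast hne).2 = f (w.head hne).1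
  | [], hne, _, _ => absurd rfl hne
  | [e], _, _, hl => by simpa using (hl e (by simp)).symm
  | e :: a :: t, _, hc, hl => by
    have := lastf_allloops (a :: t) (by simp) (List.isChain_cons_cons.mp hc).2
      (fun x hx => hl x (by simp [hx]))
    rw [List.getLast_cons (by simp : a :: t ≠ [])]
    simp only [List.head_cons] at this ⊢
    rw [this, ← (List.isChain_cons_cons.mp hc).1, ← hl e (by simp)]

lemma headf : ∀ (w : List (α × α)), w.Chain' (fun a b => a.2 = b.1) →
    (∀ e ∈ w, p e = false → f e.1 = f e.2) →
    ∀ (hne : w.filter p ≠ []),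
    f ((w.filter p).head hne).1 = f (w.head (by rintro rfl; simp at hne)).1 := by
  intro w
  induction w with
  | nil => intro _ _ hne; simp at hne
  | cons e t ih =>
    intro hc hl hne
    by_cases hp : p e
    · simp only [List.filter_cons_of_pos hp] at hne ⊢
      simp
    · have hp' : p e = false := by simpa using hp
      have hfil : List.filter p (e :: t) = List.filter p t := List.filter_cons_of_neg hp
      rw [hfil] at hne
      have htne : t ≠ [] := by rintro rfl; simp at hne
      have := ih (List.isChain_cons.mp hc).2 (fun x hx h => hl x (by simp [hx]) h) hne
      simp only [List.head_cons]
      have hhead : ((e :: t).filter p).head (by rw [hfil]; exact hne) = ((t.filter p).head hne) := by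
        congr 1
      rw [hhead, this]
      have h2 : e.2 = (t.head htne).1 := by
        have h3 := (List.isChain_cons.mp hc).1
        rw [List.head?_eq_head htne] at h3
        exact h3 _ rfl
      rw [← h2]
      exact (hl e (by simp) hp').symm

lemma lastf2 : ∀ (w : List (α × α)), w.Chain' (fun a b => a.2 = b.1) →
    (∀ e ∈ w, p e = false → f e.1 = f e.2) →
    ∀ (hne : w.filter p ≠ []),
    f ((w.filter p).getLast hne).2 = f (w.getLast (by rintro rfl; simp at hne)).2 := by
  intro w
  induction w with
  | nil => intro _ _ hne; simp at hne
  | cons e t ih =>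
    intro hc hl hne
    by_cases hft : t.filter p = []
    · have hp : p e = true := by
        by_contra hp
        exact hne (by rw [List.filter_cons_of_neg hp]; exact hft)
      have hfil : List.filter p (e :: t) = [e] := by
        rw [List.filter_cons_of_pos hp, hft]
      have hlast1 : ((e :: t).filter p).getLast hne = e := by
        simp [hfil]
      rw [hlast1]
      cases t with
      | nil => simp
      | cons a t' =>
        rw [List.getLast_cons (by simp : a :: t' ≠ [])]
        have hloops : ∀ x ∈ a :: t', f x.1 = f x.2 := by
          intro x hx
          refine hl x (by simp [hx]) ?_
          have : ∀ y ∈ a :: t', ¬ p y = true := List.filter_eq_nil_iff.mp hft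
          simpa using this x hx
        have h4 := lastf_allloops f (a :: t') (by simp) (List.isChain_cons_cons.mp hc).2 hloops
        rw [h4]
        simp only [List.head_cons]
        rw [← (List.isChain_cons_cons.mp hc).1]
    · have htne : t ≠ [] := by rintro rfl; simp at hft
      have hgl : (e :: t).getLast (by simp) = t.getLast htne := List.getLast_cons htne
      have ihr := ih (List.isChain_cons.mp hc).2 (fun x hx h => hl x (by simp [hx]) h) hft
      rw [show ((e :: t).getLast (by rintro h; simp at h)) = t.getLast htne from List.getLast_cons htne]
      by_cases hp : p e
      · have hfil : List.filter p (e :: t) = e :: List.filter p t := List.filter_cons_of_pos hp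
        have : ((e :: t).filter p).getLast hne = (t.filter p).getLast hft := by
          rw [List.getLast_congr _ _ hfil, List.getLast_cons hft]
          exact List.cons_ne_nil _ _
        rw [this, ihr]
      · have hfil : List.filter p (e :: t) = List.filter p t := List.filter_cons_of_neg hp
        have : ((e :: t).filter p).getLast hne = (t.filter p).getLast hft := List.getLast_congr _ _ hfil
        rw [this, ihr]

lemma chainF : ∀ (w : List (α × α)), w.Chain' (fun a b => a.2 = b.1) →
    (∀ e ∈ w, p e = false → f e.1 = f e.2) →
    (w.filter p).Chain' (fun a b => f a.2 = f b.1) := by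
  intro w
  induction w with
  | nil => intro _ _; exact List.isChain_nil
  | cons e t ih =>
    intro hc hl
    have ihr := ih (List.isChain_cons.mp hc).2 (fun x hx h => hl x (by simp [hx]) h)
    by_cases hp : p e
    · rw [List.filter_cons_of_pos hp]
      refine List.isChain_cons.mpr ⟨?_, ihr⟩
      intro b hb
      have hft : t.filter p ≠ [] := by rintro h; rw [h] at hb; simp at hb
      have hbe : b = (t.filter p).head hft := by
        rw [Option.mem_def, List.head?_eq_head hft] at hb
        exact (Option.some_injective _ hb).symm
      have htne : t ≠ [] := by rintro rfl; simp at hft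
      rw [hbe, headf f p t (List.isChain_cons.mp hc).2 (fun x hx h => hl x (by simp [hx]) h) hft]
      have h3 := (List.isChain_cons.mp hc).1
      rw [List.head?_eq_head htne] at h3
      rw [← h3 _ rfl]
    · rw [List.filter_cons_of_neg hp]
      exact ihr

end SplitBack

namespace SplitBack

def arcTo {V : Type*} (L : ℕ) (u : V) (j : Fin L) :
    (V ⊕ V × Fin L) × (V ⊕ V × Fin L) :=
  if h : (j : ℕ) = 0 then (Sum.inl u, Sum.inr (u, j))
  else (Sum.inr (u, ⟨(j : ℕ) - 1, lt_of_le_of_lt (Nat.sub_le _ _) j.2⟩), Sum.inr (u, j))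

lemma arcTo_snd {V : Type*} (L : ℕ) (u : V) (j : Fin L) :
    (arcTo L u j).2 = Sum.inr (u, j) := by
  unfold arcTo; split <;> rfl

lemma arcTo_fst_f {V : Type*} (L : ℕ) (u : V) (j : Fin L) :
    Sum.elim id Prod.fst (arcTo L u j).1 = u := by
  unfold arcTo; split <;> rfl

variable {V : Type*} [DecidableEq V] {A : Set (V × V)} {U : Finset V}
  {L : ℕ} {hL : 0 < L} {e : (V ⊕ V × Fin L) × (V ⊕ V × Fin L)}

lemma eq_arcTo (he : e ∈ splitArcs A U L hL) {u : V} {j : Fin L}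
    (h2 : e.2 = Sum.inr (u, j)) : u ∈ U ∧ e = arcTo L u j := by
  rcases he with ⟨a, b, hab, h2', h1⟩ | ⟨u', hu', h1, h2'⟩ | ⟨u', hu', i, hi, h1, h2'⟩
  · rw [h2'] at h2; simp at h2
  · rw [h2'] at h2
    obtain ⟨rfl, rfl⟩ : u' = u ∧ (⟨0, hL⟩ : Fin L) = j := by
      simpa [Prod.ext_iff] using h2
    refine ⟨hu', ?_⟩
    have : arcTo L u' (⟨0, hL⟩ : Fin L) = (Sum.inl u', Sum.inr (u', ⟨0, hL⟩)) := by
      unfold arcTo; rw [dif_pos rfl]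
    rw [this]
    exact Prod.ext h1 h2'
  · rw [h2'] at h2
    obtain ⟨rfl, rfl⟩ : u' = u ∧ (⟨(i : ℕ) + 1, hi⟩ : Fin L) = j := by
      simpa [Prod.ext_iff] using h2
    refine ⟨hu', ?_⟩
    have harc : arcTo L u' (⟨(i : ℕ) + 1, hi⟩ : Fin L)
        = (Sum.inr (u', i), Sum.inr (u', ⟨(i : ℕ) + 1, hi⟩)) := by
      unfold arcTo
      rw [dif_neg (by simp)]
      simp [Fin.ext_iff]
    rw [harc]
    exact Prod.ext h1 h2'

lemma tail_char (he : e ∈ splitArcs A U L hL) {u : V} {j : Fin L}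
    (h1 : e.1 = Sum.inr (u, j)) :
    (∃ h : (j : ℕ) + 1 < L, e = arcTo L u ⟨(j : ℕ) + 1, h⟩) ∨
    ((j : ℕ) = L - 1 ∧ ∃ b, (u, b) ∈ A ∧ e.2 = Sum.inl b) := by
  rcases he with ⟨a, b, hab, h2', h1'⟩ | ⟨u', hu', h1', h2'⟩ | ⟨u', hu', i, hi, h1', h2'⟩
  · right
    by_cases ha : a ∈ U
    · rw [if_pos ha] at h1'
      rw [h1'] at h1
      obtain ⟨rfl, hj⟩ : a = u ∧ (⟨L - 1, Nat.sub_lt hL Nat.one_pos⟩ : Fin L) = j := by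
        simpa [Prod.ext_iff] using h1
      exact ⟨by rw [← hj], b, hab, h2'⟩
    · rw [if_neg ha] at h1'
      rw [h1'] at h1; simp at h1
  · rw [h1'] at h1; simp at h1
  · left
    rw [h1'] at h1
    obtain ⟨rfl, rfl⟩ : u' = u ∧ i = j := by simpa [Prod.ext_iff] using h1
    refine ⟨hi, ?_⟩
    have harc : arcTo L u' (⟨(i : ℕ) + 1, hi⟩ : Fin L)
        = (Sum.inr (u', i), Sum.inr (u', ⟨(i : ℕ) + 1, hi⟩)) := by
      unfold arcTo
      rw [dif_neg (by simp)]
      simp [Fin.ext_iff]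
    rw [harc]
    exact Prod.ext h1' h2'

lemma head_inl_char (he : e ∈ splitArcs A U L hL) {b : V}
    (h2 : e.2 = Sum.inl b) :
    ∃ a, (a, b) ∈ A ∧
      e.1 = (if a ∈ U then Sum.inr (a, ⟨L - 1, Nat.sub_lt hL Nat.one_pos⟩) else Sum.inl a) := by
  rcases he with ⟨a, b', hab, h2', h1'⟩ | ⟨u', hu', h1', h2'⟩ | ⟨u', hu', i, hi, h1', h2'⟩
  · rw [h2'] at h2
    obtain rfl : b' = b := by simpa using h2
    exact ⟨a, hab, h1'⟩
  · rw [h2'] at h2; simp at h2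
  · rw [h2'] at h2; simp at h2

lemma f_of_ite {a : V} {L : ℕ} {hL : 0 < L} {U : Finset V} :
    Sum.elim id Prod.fst
      (if a ∈ U then (Sum.inr (a, ⟨L - 1, Nat.sub_lt hL Nat.one_pos⟩) : V ⊕ V × Fin L)
       else Sum.inl a) = a := by
  split <;> rfl

end SplitBack



/-- Conversely, any closed walk `C'` of the split graph `G'` that visits all
vertices of `G'` and has fewer than `(|U|+1)·L` arc occurrences must traverse
each of the `|U|` splitting paths exactly once (each arc of each splitting
path is used exactly once), and contracting each path-traversal back to a
single vertex visit yields a closed walk in `G` visiting every vertex at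
least once and every vertex of `U` exactly once, of length
`|C'| - |U|·L`. -/
theorem split_graph_walk_backward {V : Type*} [DecidableEq V]
    (A : Set (V × V)) (U : Finset V) (L : ℕ) (hL : 0 < L)
    (C' : List ((V ⊕ V × Fin L) × (V ⊕ V × Fin L)))
    (hC' : IsClosedWalk C') (hC'A : ∀ e ∈ C', e ∈ splitArcs A U L hL)
    (hall : ∀ x : V ⊕ V × Fin L, x ∈ C'.map Prod.fst)
    (hlen : C'.length < (U.card + 1) * L) :
    (∀ u ∈ U, C'.count (Sum.inl u, Sum.inr (u, ⟨0, hL⟩)) = 1) ∧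
    (∀ u ∈ U, ∀ i : Fin L, ∀ h : (i : ℕ) + 1 < L,
      C'.count (Sum.inr (u, i), Sum.inr (u, ⟨(i : ℕ) + 1, h⟩)) = 1) ∧
    ∃ C : List (V × V),
      IsClosedWalk C ∧ (∀ e ∈ C, e ∈ A) ∧
      (∀ v : V, v ∈ C.map Prod.fst) ∧
      (∀ u ∈ U, (C.map Prod.fst).count u = 1) ∧
      C.length = C'.length - U.card * L := by
  classical
  have hne := hC'.1
  have hchain := hC'.2.1
  have hclosed := hC'.2.2
  have hcnt : ∀ x : V ⊕ V × Fin L,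
      C'.countP (fun e => decide (e.1 = x)) = C'.countP (fun e => decide (e.2 = x)) :=
    SplitBack.countP_fst_eq_snd C' hC'
  have hmemtail : ∀ x : V ⊕ V × Fin L, 0 < C'.countP (fun e => decide (e.1 = x)) := by
    intro x
    rw [List.countP_pos_iff]
    obtain ⟨e, he, hex⟩ := List.mem_map.mp (hall x)
    exact ⟨e, he, by simp [hex]⟩
  have hheadchar : ∀ (u : V) (j : Fin L),
      C'.countP (fun e => decide (e.2 = (Sum.inr (u, j) : V ⊕ V × Fin L)))
        = C'.count (SplitBack.arcTo L u j) := by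
    intro u j
    rw [SplitBack.count_eq_countP']
    refine List.countP_congr ?_
    intro e hel
    simp only [decide_eq_true_eq]
    constructor
    · intro h; exact (SplitBack.eq_arcTo (hC'A e hel) h).2
    · rintro rfl; exact SplitBack.arcTo_snd L u j
  have hkpos : ∀ u : V, 0 < C'.count (SplitBack.arcTo L u ⟨0, hL⟩) := by
    intro u
    rw [← hheadchar, ← hcnt]
    exact hmemtail _
  have htailchar : ∀ (u : V) (j : Fin L) (h : (j : ℕ) + 1 < L),
      C'.countP (fun e => decide (e.1 = (Sum.inr (u, j) : V ⊕ V × Fin L)))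
        = C'.count (SplitBack.arcTo L u ⟨(j : ℕ) + 1, h⟩) := by
    intro u j h
    rw [SplitBack.count_eq_countP']
    refine List.countP_congr ?_
    intro e hel
    simp only [decide_eq_true_eq]
    constructor
    · intro h1
      rcases SplitBack.tail_char (hC'A e hel) h1 with ⟨h', he⟩ | ⟨hj, _⟩
      · exact he
      · omega
    · rintro rfl
      show (SplitBack.arcTo L u ⟨(j : ℕ) + 1, h⟩).1 = _
      unfold SplitBack.arcTo
      rw [dif_neg (by simp)]
      simp [Fin.ext_iff]
  have hkstep : ∀ (u : V) (j : Fin L) (h : (j : ℕ) + 1 < L),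
      C'.count (SplitBack.arcTo L u ⟨(j : ℕ) + 1, h⟩) = C'.count (SplitBack.arcTo L u j) := by
    intro u j h
    rw [← htailchar u j h, hcnt, hheadchar]
  have hkconst : ∀ (u : V) (j : Fin L),
      C'.count (SplitBack.arcTo L u j) = C'.count (SplitBack.arcTo L u ⟨0, hL⟩) := by
    intro u j
    have key : ∀ jv (hjv : jv < L),
        C'.count (SplitBack.arcTo L u ⟨jv, hjv⟩) = C'.count (SplitBack.arcTo L u ⟨0, hL⟩) := by
      intro jv
      induction jv with
      | zero => intro hjv; rfl
      | succ n ihn =>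
        intro hjv
        have hn : n < L := by omega
        have heq : (⟨n + 1, hjv⟩ : Fin L) = ⟨((⟨n, hn⟩ : Fin L) : ℕ) + 1, hjv⟩ := rfl
        rw [heq, hkstep u ⟨n, hn⟩ hjv, ihn hn]
    exact key j.1 j.2
  have hsum : C'.countP (fun e => e.2.isRight)
      = ∑ x ∈ U ×ˢ (Finset.univ : Finset (Fin L)), C'.count (SplitBack.arcTo L x.1 x.2) := by
    rw [List.countP_eq_length_filter]
    set Fl := C'.filter (fun e => e.2.isRight) with hFl
    have h1 : Fl.length = ∑ a ∈ (↑Fl : Multiset ((V ⊕ V × Fin L) × (V ⊕ V × Fin L))).toFinset, (↑Fl : Multiset ((V ⊕ V × Fin L) × (V ⊕ V × Fin L))).count a := by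
      rw [Multiset.toFinset_sum_count_eq]; simp
    set S := (U ×ˢ (Finset.univ : Finset (Fin L))).image
      (fun x : V × Fin L => SplitBack.arcTo L x.1 x.2) with hS
    have hsub : (↑Fl : Multiset ((V ⊕ V × Fin L) × (V ⊕ V × Fin L))).toFinset ⊆ S := by
      intro a ha
      rw [Multiset.mem_toFinset, Multiset.mem_coe] at ha
      rw [hFl, List.mem_filter] at ha
      obtain ⟨haC, har⟩ := ha
      obtain ⟨x, hx⟩ := Sum.isRight_iff.mp har
      obtain ⟨hu, hae⟩ := SplitBack.eq_arcTo (hC'A a haC)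
        (show a.2 = Sum.inr (x.1, x.2) by rw [hx])
      rw [hS]
      exact Finset.mem_image.mpr ⟨(x.1, x.2),
        Finset.mem_product.mpr ⟨hu, Finset.mem_univ _⟩, hae.symm⟩
    have h2 : ∑ a ∈ (↑Fl : Multiset ((V ⊕ V × Fin L) × (V ⊕ V × Fin L))).toFinset, (↑Fl : Multiset ((V ⊕ V × Fin L) × (V ⊕ V × Fin L))).count a
        = ∑ a ∈ S, (↑Fl : Multiset ((V ⊕ V × Fin L) × (V ⊕ V × Fin L))).count a := by
      refine Finset.sum_subset hsub ?_
      intro x _ hx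
      rw [Multiset.count_eq_zero, Multiset.mem_coe]
      intro hmem
      exact hx (Multiset.mem_toFinset.mpr (Multiset.mem_coe.mpr hmem))
    have hinj : ∀ x ∈ U ×ˢ (Finset.univ : Finset (Fin L)),
        ∀ y ∈ U ×ˢ (Finset.univ : Finset (Fin L)),
        SplitBack.arcTo L x.1 x.2 = SplitBack.arcTo L y.1 y.2 → x = y := by
      intro x _ y _ hxy
      have h := congrArg Prod.snd hxy
      rw [SplitBack.arcTo_snd, SplitBack.arcTo_snd] at h
      obtain ⟨h1', h2'⟩ : x.1 = y.1 ∧ x.2 = y.2 := by simpa [Prod.ext_iff] using h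
      exact Prod.ext h1' h2'
    have h3 : ∑ a ∈ S, (↑Fl : Multiset ((V ⊕ V × Fin L) × (V ⊕ V × Fin L))).count a
        = ∑ x ∈ U ×ˢ (Finset.univ : Finset (Fin L)),
            (↑Fl : Multiset ((V ⊕ V × Fin L) × (V ⊕ V × Fin L))).count (SplitBack.arcTo L x.1 x.2) := by
      rw [hS]; exact Finset.sum_image hinj
    have h4 : ∀ (u : V) (j : Fin L),
        (↑Fl : Multiset ((V ⊕ V × Fin L) × (V ⊕ V × Fin L))).count (SplitBack.arcTo L u j) = C'.count (SplitBack.arcTo L u j) := by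
      intro u j
      have e2 := SplitBack.count_eq_countP' C' (SplitBack.arcTo L u j)
      rw [Multiset.coe_count,
        @SplitBack.count_eq_countP' _ instBEqOfDecidableEq instLawfulBEq inferInstance Fl (SplitBack.arcTo L u j),
        hFl, List.countP_filter, e2]
      refine List.countP_congr ?_
      intro e _
      simp only [Bool.and_eq_true, decide_eq_true_eq]
      constructor
      · rintro ⟨h1, _⟩; exact h1
      · rintro rfl; exact ⟨rfl, by rw [SplitBack.arcTo_snd]; rfl⟩
    rw [h1, h2, h3]
    exact Finset.sum_congr rfl (fun x _ => h4 x.1 x.2)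
  have hsum2 : C'.countP (fun e => e.2.isRight)
      = ∑ u ∈ U, L * C'.count (SplitBack.arcTo L u ⟨0, hL⟩) := by
    rw [hsum, Finset.sum_product]
    refine Finset.sum_congr rfl (fun u _ => ?_)
    rw [Finset.sum_congr rfl (fun j _ => hkconst u j)]
    simp [Finset.card_univ, mul_comm]
  have hkone : ∀ u ∈ U, C'.count (SplitBack.arcTo L u ⟨0, hL⟩) = 1 := by
    intro u hu
    by_contra hne1
    have h2le : 2 ≤ C'.count (SplitBack.arcTo L u ⟨0, hL⟩) := by
      have := hkpos u; omega
    have hlb : U.card + 1 ≤ ∑ w ∈ U, C'.count (SplitBack.arcTo L w ⟨0, hL⟩) := by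
      have hlt := Finset.sum_lt_sum (s := U) (f := fun _ => 1)
        (g := fun w => C'.count (SplitBack.arcTo L w ⟨0, hL⟩))
        (fun i _ => hkpos i) ⟨u, hu, h2le⟩
      simpa using hlt
    have hbig : (U.card + 1) * L ≤ C'.length := by
      calc (U.card + 1) * L = L * (U.card + 1) := mul_comm _ _
        _ ≤ L * ∑ w ∈ U, C'.count (SplitBack.arcTo L w ⟨0, hL⟩) :=
            Nat.mul_le_mul_left _ hlb
        _ = ∑ w ∈ U, L * C'.count (SplitBack.arcTo L w ⟨0, hL⟩) := Finset.mul_sum _ _ _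
        _ = C'.countP (fun e => e.2.isRight) := hsum2.symm
        _ ≤ C'.length := List.countP_le_length
    omega
  have harc0 : ∀ u : V, SplitBack.arcTo L u ⟨0, hL⟩ = (Sum.inl u, Sum.inr (u, ⟨0, hL⟩)) := by
    intro u; unfold SplitBack.arcTo; rw [dif_pos rfl]
  refine ⟨?_, ?_, ?_⟩
  · intro u hu; rw [show ((Sum.inl u, Sum.inr (u, ⟨0, hL⟩)) :
      (V ⊕ V × Fin L) × (V ⊕ V × Fin L)) = SplitBack.arcTo L u ⟨0, hL⟩ from (harc0 u).symm]
    exact hkone u hu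
  · intro u hu i h
    have harc : SplitBack.arcTo L u ⟨(i : ℕ) + 1, h⟩
        = (Sum.inr (u, i), Sum.inr (u, ⟨(i : ℕ) + 1, h⟩)) := by
      unfold SplitBack.arcTo; rw [dif_neg (by simp)]; simp [Fin.ext_iff]
    rw [← harc, hkconst u ⟨(i : ℕ) + 1, h⟩]
    exact hkone u hu
  · -- the contracted walk
    set f : V ⊕ V × Fin L → V := Sum.elim id Prod.fst with hfdef
    have hloops : ∀ e ∈ C', (fun e : (V ⊕ V × Fin L) × (V ⊕ V × Fin L) => e.2.isLeft) e = false
        → f e.1 = f e.2 := by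
      intro e he hpe
      have hr : e.2.isRight = true := by
        rw [← Sum.not_isLeft]; simp [hpe]
      obtain ⟨x, hx⟩ := Sum.isRight_iff.mp hr
      obtain ⟨_, hae⟩ := SplitBack.eq_arcTo (hC'A e he)
        (show e.2 = Sum.inr (x.1, x.2) by rw [hx])
      rw [hae, SplitBack.arcTo_snd]
      exact SplitBack.arcTo_fst_f L x.1 x.2
    have hexhead : ∀ v : V, ∃ e ∈ C', e.2 = Sum.inl v := by
      intro v
      have h0 : 0 < C'.countP (fun e => decide (e.2 = (Sum.inl v : V ⊕ V × Fin L))) := by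
        rw [← hcnt]; exact hmemtail _
      obtain ⟨e, he, hp⟩ := List.countP_pos_iff.mp h0
      exact ⟨e, he, of_decide_eq_true hp⟩
    set Fl2 := C'.filter (fun e => e.2.isLeft) with hF2
    set Cw := Fl2.map (Prod.map f f) with hCw
    have hF2ne : Fl2 ≠ [] := by
      obtain ⟨e0, he0⟩ : ∃ e, e ∈ C' := by
        cases C' with
        | nil => exact absurd rfl hne
        | cons a t => exact ⟨a, by simp⟩
      obtain ⟨e1, he1, h2⟩ := hexhead (f e0.1)
      have hm : e1 ∈ Fl2 := List.mem_filter.mpr ⟨he1, by rw [h2]; rfl⟩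
      intro h; rw [h] at hm; simp at hm
    have hCwne : Cw ≠ [] := by
      rw [hCw]; intro h; exact hF2ne (List.map_eq_nil_iff.mp h)
    have hCchain : Cw.Chain' (fun a b => a.2 = b.1) := by
      rw [hCw, List.Chain', List.isChain_map]
      exact List.IsChain.imp (fun a b h => by simpa using h)
        (SplitBack.chainF f (fun e => e.2.isLeft) C' hchain hloops)
    have hlastC' : (C'.getLast hne).2 = (C'.head hne).1 := by
      rw [List.getLast?_eq_getLast hne, List.head?_eq_head hne] at hclosed
      simpa using hclosed
    have hCclosed : Cw.getLast?.map Prod.snd = Cw.head?.map Prod.fst := by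
      rw [hCw, List.getLast?_map, List.head?_map,
        List.getLast?_eq_getLast hF2ne, List.head?_eq_head hF2ne]
      have hl2 := SplitBack.lastf2 f (fun e => e.2.isLeft) C' hchain hloops hF2ne
      have hh := SplitBack.headf f (fun e => e.2.isLeft) C' hchain hloops hF2ne
      show some (f (Fl2.getLast hF2ne).2) = some (f (Fl2.head hF2ne).1)
      rw [hl2, hh, hlastC']
    have hCWclosed : IsClosedWalk Cw := ⟨hCwne, hCchain, hCclosed⟩
    refine ⟨Cw, hCWclosed, ?_, ?_, ?_, ?_⟩
    · intro e he
      rw [hCw, List.mem_map] at he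
      obtain ⟨e', he', rfl⟩ := he
      rw [hF2, List.mem_filter] at he'
      obtain ⟨heC, hel⟩ := he'
      obtain ⟨b, hb⟩ := Sum.isLeft_iff.mp hel
      obtain ⟨a, haA, h1⟩ := SplitBack.head_inl_char (hC'A e' heC) hb
      have hpm : Prod.map f f e' = (a, b) := by
        refine Prod.ext ?_ ?_
        · show f e'.1 = a
          rw [h1, hfdef]; exact SplitBack.f_of_ite (hL := hL)
        · show f e'.2 = b
          rw [hb, hfdef]; rfl
      rw [hpm]; exact haA
    · intro v
      obtain ⟨e1, he1, h2⟩ := hexhead v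
      have hmem : Prod.map f f e1 ∈ Cw := by
        rw [hCw]
        exact List.mem_map_of_mem (List.mem_filter.mpr ⟨he1, by rw [h2]; rfl⟩)
      have hsnd : f e1.2 = v := by
        rw [h2, hfdef]; rfl
      have h0 : 0 < Cw.countP (fun e => decide (e.2 = v)) :=
        List.countP_pos_iff.mpr ⟨_, hmem, by simp [hsnd]⟩
      rw [← SplitBack.countP_fst_eq_snd Cw hCWclosed v] at h0
      obtain ⟨e2, he2, hp2⟩ := List.countP_pos_iff.mp h0
      exact List.mem_map.mpr ⟨e2, he2, of_decide_eq_true hp2⟩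
    · intro u hu
      have hmap : Cw.map Prod.fst = Fl2.map (fun e => f e.1) := by
        rw [hCw, List.map_map]; rfl
      rw [hmap, SplitBack.count_map_eq_countP, hF2, List.countP_filter]
      have hcg : C'.countP (fun e => decide (f e.1 = u) && e.2.isLeft)
          = C'.countP (fun e => decide
              (e.1 = (Sum.inr (u, ⟨L - 1, Nat.sub_lt hL Nat.one_pos⟩) : V ⊕ V × Fin L))) := by
        refine List.countP_congr ?_
        intro e hel
        simp only [Bool.and_eq_true, decide_eq_true_eq]
        constructor
        · rintro ⟨hf1, hil⟩
          obtain ⟨b, hb⟩ := Sum.isLeft_iff.mp hil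
          obtain ⟨a, haA, h1⟩ := SplitBack.head_inl_char (hC'A e hel) hb
          have ha : a = u := by
            rw [h1] at hf1
            rw [← hf1]
            exact (SplitBack.f_of_ite (hL := hL)).symm
          rw [h1, ha, if_pos hu]
        · intro h1
          rcases SplitBack.tail_char (hC'A e hel)
              (show e.1 = Sum.inr (u, (⟨L - 1, Nat.sub_lt hL Nat.one_pos⟩ : Fin L)) from h1)
            with ⟨h', _⟩ | ⟨_, b, hbA, h2⟩
          · exfalso
            have : L - 1 + 1 < L := h'
            omega
          · constructor
            · rw [h1]; rfl
            · rw [h2]; rfl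
      rw [hcg, hcnt, hheadchar, hkconst, hkone u hu]
    · have hCl : Cw.length = Fl2.length := by rw [hCw, List.length_map]
      have h5 : C'.length = C'.countP (fun e => e.2.isLeft)
          + C'.countP (fun e => e.2.isRight) := by
        rw [List.length_eq_countP_add_countP (fun e => e.2.isLeft)]
        congr 1
        refine List.countP_congr (fun e _ => ?_)
        simp
      have h6 : C'.countP (fun e => e.2.isRight) = U.card * L := by
        rw [hsum2, Finset.sum_congr rfl (fun w hw => by rw [hkone w hw, mul_one]),
          Finset.sum_const, smul_eq_mul, mul_comm]
      rw [hCl, hF2, ← List.countP_eq_length_filter]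
      omega
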